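/- arXiv:2406.17056 — 3 statements merged into one kernel-verified Lean document; each statement's English description precedes it below -/
import Mathlib

section
/- Let Γ = diag(Γ₁, Γ₂) be block diagonal with Γ₁ of size 2q×2p and Γ₂ of size 2mq×mq, and let S = [[S₁₁, S₁₂],[S₁₂', S₂₂]] be symmetric positive definite with blocks conformable to Γ. Set E := S₂₂ − S₁₂'S₁₁⁻¹S₁₂ and H := S₁₂'S₁₁⁻¹Γ₁. Then the top-left 2p×2p block of (Γ'S⁻¹Γ)⁻¹ equals (Γ₁'S₁₁⁻¹Γ₁ + H'E^{-1/2}(I − J(J'J)⁻¹J')E^{-1/2}H)⁻¹, where J := E^{-1/2}Γ₂, provided Γ₁'S₁₁⁻¹Γ₁ is invertible, Γ₂ has full column rank, and E is positive definite. -/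
open Matrix

set_option maxHeartbeats 1000000

section helpers
variable {n m : Type*} [Fintype n] [Fintype m] [DecidableEq n] [DecidableEq m]

lemma myToBlocks₁₁_inv (W : Matrix n n ℝ) (X : Matrix n m ℝ) (Y : Matrix m n ℝ)
    (Z : Matrix m m ℝ) [Invertible Z] [Invertible (W - X * Z⁻¹ * Y)] :
    (fromBlocks W X Y Z)⁻¹.toBlocks₁₁ = (W - X * Z⁻¹ * Y)⁻¹ := by
  haveI : Invertible (W - X * ⅟Z * Y) := by rw [invOf_eq_nonsing_inv]; infer_instance
  haveI := fromBlocks₂₂Invertible W X Y Z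
  rw [← invOf_eq_nonsing_inv, invOf_fromBlocks₂₂_eq]
  simp only [toBlocks_fromBlocks₁₁, invOf_eq_nonsing_inv]
end helpers

section main
variable {n₁ n₂ p₁ p₂ : Type*} [Fintype n₁] [Fintype n₂] [Fintype p₁] [Fintype p₂]
  [DecidableEq n₁] [DecidableEq n₂] [DecidableEq p₁] [DecidableEq p₂]

lemma myPosDef_conj' {M : Matrix n₁ n₁ ℝ} (hM : M.PosDef) (B : Matrix n₁ p₁ ℝ)
    (hB : Function.Injective B.mulVec) : (Bᵀ * M * B).PosDef := by
  have h := hM.posSemidef.conjTranspose_mul_mul_same B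
  rw [conjTranspose_eq_transpose_of_trivial] at h
  refine PosDef.of_dotProduct_mulVec_pos h.1 fun x hx => ?_
  have hBx : B *ᵥ x ≠ 0 := fun h0 => hx (hB (by rw [h0, mulVec_zero]))
  have h2 := hM.dotProduct_mulVec_pos hBx
  simpa only [star_mulVec, dotProduct_mulVec, vecMul_vecMul,
    conjTranspose_eq_transpose_of_trivial] using h2

lemma myPosDef_block₁₁' {A : Matrix n₁ n₁ ℝ} {B : Matrix n₁ n₂ ℝ} {C : Matrix n₂ n₁ ℝ}
    {D : Matrix n₂ n₂ ℝ} (hS : (fromBlocks A B C D).PosDef) : A.PosDef := by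
  refine PosDef.of_dotProduct_mulVec_pos ?_ ?_
  · have h := congrArg Matrix.toBlocks₁₁ hS.1
    simp [toBlocks₁₁, conjTranspose, fromBlocks] at h; exact h
  · intro x hx
    have h2 := hS.dotProduct_mulVec_pos (x := Sum.elim x 0) (fun h0 => hx (funext fun i => congrFun h0 (Sum.inl i)))
    simpa [fromBlocks_mulVec, sumElim_dotProduct_sumElim] using h2

lemma tsgmm_main
    (Γ₁ : Matrix n₁ p₁ ℝ) (Γ₂ : Matrix n₂ p₂ ℝ) (S₁₁ : Matrix n₁ n₁ ℝ)
    (S₁₂ : Matrix n₁ n₂ ℝ) (S₂₂ : Matrix n₂ n₂ ℝ) (F : Matrix n₂ n₂ ℝ)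
    (hS : (fromBlocks S₁₁ S₁₂ S₁₂ᵀ S₂₂).PosDef)
    (hE : (S₂₂ - S₁₂ᵀ * S₁₁⁻¹ * S₁₂).PosDef)
    (hΓ₁ : IsUnit (Γ₁ᵀ * S₁₁⁻¹ * Γ₁))
    (hΓ₂ : Function.Injective Γ₂.mulVec)
    (hFt : Fᵀ = F) (hFF : F * F = S₂₂ - S₁₂ᵀ * S₁₁⁻¹ * S₁₂) :
    ((fromBlocks Γ₁ 0 0 Γ₂)ᵀ * (fromBlocks S₁₁ S₁₂ S₁₂ᵀ S₂₂)⁻¹ *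
        (fromBlocks Γ₁ 0 0 Γ₂))⁻¹.toBlocks₁₁
      = (Γ₁ᵀ * S₁₁⁻¹ * Γ₁ +
          (S₁₂ᵀ * S₁₁⁻¹ * Γ₁)ᵀ * F⁻¹ *
            (1 - (F⁻¹ * Γ₂) * ((F⁻¹ * Γ₂)ᵀ * (F⁻¹ * Γ₂))⁻¹ * (F⁻¹ * Γ₂)ᵀ) *
            F⁻¹ * (S₁₂ᵀ * S₁₁⁻¹ * Γ₁))⁻¹ := by
  -- Notation
  set E := S₂₂ - S₁₂ᵀ * S₁₁⁻¹ * S₁₂ with hEdef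
  have hS₁₁ : S₁₁.PosDef := myPosDef_block₁₁' hS
  haveI : Invertible S₁₁ := hS₁₁.isUnit.invertible
  haveI : Invertible E := hE.isUnit.invertible
  have hS11t : S₁₁⁻¹ᵀ = S₁₁⁻¹ := by
    rw [transpose_nonsing_inv]
    congr 1
    exact IsSymm.eq (by simpa [conjTranspose_eq_transpose_of_trivial] using hS₁₁.1)
  -- F facts
  have hFunit : IsUnit F := by
    have h : IsUnit (F * F).det := by rw [hFF]; exact hE.isUnit.map detMonoidHom
    rw [det_mul] at h
    exact (isUnit_iff_isUnit_det F).2 (isUnit_of_mul_isUnit_left h)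
  haveI : Invertible F := hFunit.invertible
  have hFinv : F⁻¹ * F⁻¹ = E⁻¹ := by rw [← Matrix.mul_inv_rev, hFF]
  have hFit : F⁻¹ᵀ = F⁻¹ := by rw [transpose_nonsing_inv, hFt]
  -- injectivity of Γ₁
  have hΓ₁inj : Function.Injective Γ₁.mulVec := by
    intro x y hxy
    apply mulVec_injective_iff_isUnit.2 hΓ₁
    show (Γ₁ᵀ * S₁₁⁻¹ * Γ₁) *ᵥ x = (Γ₁ᵀ * S₁₁⁻¹ * Γ₁) *ᵥ y
    simp only [← mulVec_mulVec, hxy]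
  have hA : (Γ₁ᵀ * S₁₁⁻¹ * Γ₁).PosDef := myPosDef_conj' hS₁₁.inv Γ₁ hΓ₁inj
  have hD : (Γ₂ᵀ * E⁻¹ * Γ₂).PosDef := myPosDef_conj' hE.inv Γ₂ hΓ₂
  haveI : Invertible (Γ₂ᵀ * E⁻¹ * Γ₂) := hD.isUnit.invertible
  -- the inverse of S
  have hSinv : (fromBlocks S₁₁ S₁₂ S₁₂ᵀ S₂₂)⁻¹ =
      fromBlocks (S₁₁⁻¹ + S₁₁⁻¹ * S₁₂ * E⁻¹ * S₁₂ᵀ * S₁₁⁻¹) (-(S₁₁⁻¹ * S₁₂ * E⁻¹))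
        (-(E⁻¹ * S₁₂ᵀ * S₁₁⁻¹)) E⁻¹ := by
    haveI : Invertible (S₂₂ - S₁₂ᵀ * ⅟S₁₁ * S₁₂) := by
      rw [invOf_eq_nonsing_inv]; exact inferInstanceAs (Invertible E)
    haveI := fromBlocks₁₁Invertible S₁₁ S₁₂ S₁₂ᵀ S₂₂
    rw [← invOf_eq_nonsing_inv, invOf_fromBlocks₁₁_eq]
    simp only [invOf_eq_nonsing_inv, ← hEdef]
  -- the block product
  have hM : (fromBlocks Γ₁ 0 0 Γ₂)ᵀ * (fromBlocks S₁₁ S₁₂ S₁₂ᵀ S₂₂)⁻¹ * (fromBlocks Γ₁ 0 0 Γ₂)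
      = fromBlocks
          (Γ₁ᵀ * S₁₁⁻¹ * Γ₁ + (S₁₂ᵀ * S₁₁⁻¹ * Γ₁)ᵀ * E⁻¹ * (S₁₂ᵀ * S₁₁⁻¹ * Γ₁))
          (-((S₁₂ᵀ * S₁₁⁻¹ * Γ₁)ᵀ * E⁻¹ * Γ₂))
          (-(Γ₂ᵀ * E⁻¹ * (S₁₂ᵀ * S₁₁⁻¹ * Γ₁)))
          (Γ₂ᵀ * E⁻¹ * Γ₂) := by
    rw [hSinv, fromBlocks_transpose, fromBlocks_multiply, fromBlocks_multiply]
    simp [transpose_mul, hS11t, Matrix.mul_add, Matrix.add_mul, Matrix.mul_assoc]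
  -- J-facts
  have hJJ : (F⁻¹ * Γ₂)ᵀ * (F⁻¹ * Γ₂) = Γ₂ᵀ * E⁻¹ * Γ₂ := by
    simp only [transpose_mul, hFit, Matrix.mul_assoc, ← hFinv]
  haveI hJJinv : Invertible ((F⁻¹ * Γ₂)ᵀ * (F⁻¹ * Γ₂)) := by
    rw [hJJ]; infer_instance
  -- the key algebraic identity
  have hkey : (Γ₁ᵀ * S₁₁⁻¹ * Γ₁ + (S₁₂ᵀ * S₁₁⁻¹ * Γ₁)ᵀ * E⁻¹ * (S₁₂ᵀ * S₁₁⁻¹ * Γ₁))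
        - (-((S₁₂ᵀ * S₁₁⁻¹ * Γ₁)ᵀ * E⁻¹ * Γ₂)) * (Γ₂ᵀ * E⁻¹ * Γ₂)⁻¹ *
          (-(Γ₂ᵀ * E⁻¹ * (S₁₂ᵀ * S₁₁⁻¹ * Γ₁)))
      = Γ₁ᵀ * S₁₁⁻¹ * Γ₁ +
          (S₁₂ᵀ * S₁₁⁻¹ * Γ₁)ᵀ * F⁻¹ *
            (1 - (F⁻¹ * Γ₂) * ((F⁻¹ * Γ₂)ᵀ * (F⁻¹ * Γ₂))⁻¹ * (F⁻¹ * Γ₂)ᵀ) *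
            F⁻¹ * (S₁₂ᵀ * S₁₁⁻¹ * Γ₁) := by
    rw [hJJ]
    simp only [Matrix.mul_sub, Matrix.sub_mul, Matrix.mul_one, Matrix.one_mul,
      transpose_mul, hFit, hS11t, Matrix.neg_mul, Matrix.mul_neg, neg_neg,
      sub_neg_eq_add, Matrix.mul_assoc, ← hFinv]
    abel
  -- positive semidefiniteness of the projection part
  set J : Matrix n₂ p₂ ℝ := F⁻¹ * Γ₂ with hJdef
  set P : Matrix n₂ n₂ ℝ := J * (Jᵀ * J)⁻¹ * Jᵀ with hPdef
  have hJJt : (Jᵀ * J)⁻¹ᵀ = (Jᵀ * J)⁻¹ := by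
    rw [transpose_nonsing_inv, transpose_mul, transpose_transpose]
  have hPt : (1 - P)ᵀ = 1 - P := by
    rw [hPdef]
    simp only [transpose_sub, transpose_one, transpose_mul, transpose_transpose, hJJt,
      Matrix.mul_assoc]
  have hPP : (1 - P) * (1 - P) = 1 - P := by
    have h2 : P * P = P := by
      rw [hPdef]
      calc J * (Jᵀ * J)⁻¹ * Jᵀ * (J * (Jᵀ * J)⁻¹ * Jᵀ)
          = J * ((Jᵀ * J)⁻¹ * ((Jᵀ * J) * ((Jᵀ * J)⁻¹ * Jᵀ))) := by
            simp only [Matrix.mul_assoc]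
        _ = J * (Jᵀ * J)⁻¹ * Jᵀ := by
            rw [← Matrix.mul_assoc (Jᵀ * J), Matrix.mul_inv_of_invertible, Matrix.one_mul,
              ← Matrix.mul_assoc, ← Matrix.mul_assoc]
    simp only [Matrix.mul_sub, Matrix.sub_mul, Matrix.mul_one, Matrix.one_mul, h2]
    abel
  have hPSD : ((S₁₂ᵀ * S₁₁⁻¹ * Γ₁)ᵀ * F⁻¹ * (1 - P) * F⁻¹ * (S₁₂ᵀ * S₁₁⁻¹ * Γ₁)).PosSemidef := by
    have heq : (S₁₂ᵀ * S₁₁⁻¹ * Γ₁)ᵀ * F⁻¹ * (1 - P) * F⁻¹ * (S₁₂ᵀ * S₁₁⁻¹ * Γ₁)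
        = ((1 - P) * (F⁻¹ * (S₁₂ᵀ * S₁₁⁻¹ * Γ₁)))ᵀ *
            ((1 - P) * (F⁻¹ * (S₁₂ᵀ * S₁₁⁻¹ * Γ₁))) := by
      simp only [transpose_mul, transpose_transpose, hPt, hFit, hS11t, Matrix.mul_assoc]
      rw [← Matrix.mul_assoc (1 - P) (1 - P), hPP]
    rw [heq]
    have h := posSemidef_conjTranspose_mul_self ((1 - P) * (F⁻¹ * (S₁₂ᵀ * S₁₁⁻¹ * Γ₁)))
    rwa [conjTranspose_eq_transpose_of_trivial] at h
  have hRHS : (Γ₁ᵀ * S₁₁⁻¹ * Γ₁ +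
      (S₁₂ᵀ * S₁₁⁻¹ * Γ₁)ᵀ * F⁻¹ * (1 - P) * F⁻¹ * (S₁₂ᵀ * S₁₁⁻¹ * Γ₁)).PosDef :=
    hA.add_posSemidef hPSD
  haveI hSchurInv : Invertible
      ((Γ₁ᵀ * S₁₁⁻¹ * Γ₁ + (S₁₂ᵀ * S₁₁⁻¹ * Γ₁)ᵀ * E⁻¹ * (S₁₂ᵀ * S₁₁⁻¹ * Γ₁))
        - (-((S₁₂ᵀ * S₁₁⁻¹ * Γ₁)ᵀ * E⁻¹ * Γ₂)) * (Γ₂ᵀ * E⁻¹ * Γ₂)⁻¹ *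
          (-(Γ₂ᵀ * E⁻¹ * (S₁₂ᵀ * S₁₁⁻¹ * Γ₁)))) :=
    (hRHS.isUnit.invertible).copy _ hkey
  rw [hM, myToBlocks₁₁_inv, hkey]
end main


lemma myMulVecInj {k l : ℕ} (B : Matrix (Fin k) (Fin l) ℝ) (hB : B.rank = l) :
    Function.Injective B.mulVec := by
  rw [← coe_mulVecLin, ← LinearMap.ker_eq_bot, ← Submodule.finrank_eq_zero]
  have h := LinearMap.finrank_range_add_finrank_ker B.mulVecLin
  rw [show (Module.finrank ℝ (LinearMap.range B.mulVecLin)) = l from hB] at h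
  simpa using h

section

open scoped ComplexOrder

/-- The square root of a positive semidefinite matrix, as `Matrix.PosSemidef.sqrt` was defined
in Mathlib of December 2024 (it has since been removed from Mathlib). -/
noncomputable def Matrix.PosSemidef.sqrt {n 𝕜 : Type*} [Fintype n] [DecidableEq n] [RCLike 𝕜]
    {A : Matrix n n 𝕜} (hA : A.PosSemidef) : Matrix n n 𝕜 :=
  hA.1.eigenvectorUnitary.1 * diagonal ((↑) ∘ (√·) ∘ hA.1.eigenvalues) *
    (star hA.1.eigenvectorUnitary : Matrix n n 𝕜)

end

lemma mySqrt_transpose {n : Type*} [Fintype n] [DecidableEq n] {A : Matrix n n ℝ}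
    (hA : A.PosSemidef) : (Matrix.PosSemidef.sqrt hA)ᵀ = Matrix.PosSemidef.sqrt hA := by
  rw [← conjTranspose_eq_transpose_of_trivial]
  unfold Matrix.PosSemidef.sqrt
  simp only [conjTranspose_mul, Matrix.star_eq_conjTranspose, conjTranspose_conjTranspose,
    diagonal_conjTranspose, Matrix.mul_assoc]
  congr 3

lemma mySqrt_mul_self {n : Type*} [Fintype n] [DecidableEq n] {A : Matrix n n ℝ}
    (hA : A.PosSemidef) : Matrix.PosSemidef.sqrt hA * Matrix.PosSemidef.sqrt hA = A := by
  unfold Matrix.PosSemidef.sqrt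
  conv_rhs => rw [hA.1.spectral_theorem]
  rw [Unitary.conjStarAlgAut_apply]
  have hU : (star hA.1.eigenvectorUnitary : Matrix n n ℝ) * hA.1.eigenvectorUnitary.1 = 1 :=
    Unitary.star_mul_self_of_mem hA.1.eigenvectorUnitary.2
  calc _ = hA.1.eigenvectorUnitary.1 * (diagonal ((↑) ∘ (√·) ∘ hA.1.eigenvalues) *
        ((star hA.1.eigenvectorUnitary : Matrix n n ℝ) * hA.1.eigenvectorUnitary.1) *
        diagonal ((↑) ∘ (√·) ∘ hA.1.eigenvalues)) *
        (star hA.1.eigenvectorUnitary : Matrix n n ℝ) := by simp only [Matrix.mul_assoc]; rfl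
    _ = _ := by
      rw [hU, Matrix.mul_one, diagonal_mul_diagonal]
      congr 3
      ext i
      simp [Real.mul_self_sqrt (hA.eigenvalues_nonneg i)]

/-- The top-left block of the inverse joint GMM variance `(Γᵀ S⁻¹ Γ)⁻¹`, with
`Γ = diag(Γ₁,Γ₂)` and `S = [[S₁₁,S₁₂],[S₁₂ᵀ,S₂₂]]` positive definite, equals
`(Γ₁ᵀS₁₁⁻¹Γ₁ + Hᵀ E^{-1/2} M_J E^{-1/2} H)⁻¹` where `E` is the Schur complement,
`H = S₁₂ᵀS₁₁⁻¹Γ₁`, `J = E^{-1/2}Γ₂` and `M_J = I - J(JᵀJ)⁻¹Jᵀ`. -/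
theorem tsgmm_variance_formula {p q m : ℕ}
    (Γ₁ : Matrix (Fin (2*q)) (Fin (2*p)) ℝ)
    (Γ₂ : Matrix (Fin (2*m*q)) (Fin (m*q)) ℝ)
    (S₁₁ : Matrix (Fin (2*q)) (Fin (2*q)) ℝ)
    (S₁₂ : Matrix (Fin (2*q)) (Fin (2*m*q)) ℝ)
    (S₂₂ : Matrix (Fin (2*m*q)) (Fin (2*m*q)) ℝ)
    (hS : (Matrix.fromBlocks S₁₁ S₁₂ S₁₂ᵀ S₂₂).PosDef)
    (hE : (S₂₂ - S₁₂ᵀ * S₁₁⁻¹ * S₁₂).PosDef)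
    (hΓ₁ : IsUnit (Γ₁ᵀ * S₁₁⁻¹ * Γ₁))
    (hΓ₂ : Γ₂.rank = m*q) :
    ((Matrix.fromBlocks Γ₁ 0 0 Γ₂)ᵀ * (Matrix.fromBlocks S₁₁ S₁₂ S₁₂ᵀ S₂₂)⁻¹ *
        (Matrix.fromBlocks Γ₁ 0 0 Γ₂))⁻¹.toBlocks₁₁
      = (Γ₁ᵀ * S₁₁⁻¹ * Γ₁ +
          (S₁₂ᵀ * S₁₁⁻¹ * Γ₁)ᵀ * (Matrix.PosSemidef.sqrt hE.posSemidef)⁻¹ *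
            (1 - ((Matrix.PosSemidef.sqrt hE.posSemidef)⁻¹ * Γ₂) *
                (((Matrix.PosSemidef.sqrt hE.posSemidef)⁻¹ * Γ₂)ᵀ * ((Matrix.PosSemidef.sqrt hE.posSemidef)⁻¹ * Γ₂))⁻¹ *
                ((Matrix.PosSemidef.sqrt hE.posSemidef)⁻¹ * Γ₂)ᵀ) *
            (Matrix.PosSemidef.sqrt hE.posSemidef)⁻¹ * (S₁₂ᵀ * S₁₁⁻¹ * Γ₁))⁻¹ := by
  have hFt : (Matrix.PosSemidef.sqrt hE.posSemidef)ᵀ = Matrix.PosSemidef.sqrt hE.posSemidef :=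
    mySqrt_transpose _
  exact tsgmm_main Γ₁ Γ₂ S₁₁ S₁₂ S₂₂ (Matrix.PosSemidef.sqrt hE.posSemidef) hS hE hΓ₁
    (myMulVecInj Γ₂ hΓ₂) hFt (mySqrt_mul_self hE.posSemidef)
end

section
/- Fix λ ∈ (0,1), Φ_u > 0, δ ≥ 0, real c, and a symmetric positive definite p×p matrix A. Define V_TS2SLS = (Φ_u/λ + ((1−λ)/λ)c)A⁻¹ and V_TSGMM = (Φ_u/λ − ((1−λ)/λ)(Φ_u²δ/(1+Φ_uδ)))A⁻¹. Then V_TS2SLS − V_TSGMM is positive semidefinite if and only if c ≥ −Φ_u²δ/(1+Φ_uδ), and positive definite iff the inequality is strict. -/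
open Matrix

lemma smul_posDef_quad {p : ℕ} (t : ℝ) {M : Matrix (Fin p) (Fin p) ℝ}
    (x : Fin p → ℝ) :
    dotProduct (star x) ((t • M) *ᵥ x) = t * dotProduct (star x) (M *ᵥ x) := by
  simp [smul_mulVec, dotProduct_smul]

lemma smul_psd_iff {p : ℕ} (hp : 0 < p) (t : ℝ) {M : Matrix (Fin p) (Fin p) ℝ}
    (hM : M.PosDef) : (t • M).PosSemidef ↔ 0 ≤ t := by
  constructor
  · intro h
    have hx : (Pi.single (⟨0, hp⟩ : Fin p) (1:ℝ) : Fin p → ℝ) ≠ 0 := by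
      intro hcontra
      have := congrFun hcontra ⟨0, hp⟩
      simp at this
    have h1 := h.dotProduct_mulVec_nonneg (Pi.single ⟨0, hp⟩ 1)
    rw [smul_posDef_quad] at h1
    have h2 := hM.dotProduct_mulVec_pos hx
    nlinarith
  · intro ht
    refine .of_dotProduct_mulVec_nonneg ?_ (fun x => ?_)
    · unfold Matrix.IsHermitian
      rw [conjTranspose_smul, hM.1.eq]
      simp
    · rw [smul_posDef_quad]
      exact mul_nonneg ht (hM.posSemidef.dotProduct_mulVec_nonneg x)

lemma smul_pd_iff {p : ℕ} (hp : 0 < p) (t : ℝ) {M : Matrix (Fin p) (Fin p) ℝ}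
    (hM : M.PosDef) : (t • M).PosDef ↔ 0 < t := by
  constructor
  · intro h
    have hx : (Pi.single (⟨0, hp⟩ : Fin p) (1:ℝ) : Fin p → ℝ) ≠ 0 := by
      intro hcontra
      have := congrFun hcontra ⟨0, hp⟩
      simp at this
    have h1 := h.dotProduct_mulVec_pos hx
    rw [smul_posDef_quad] at h1
    have h2 := hM.dotProduct_mulVec_pos hx
    nlinarith
  · intro ht
    refine .of_dotProduct_mulVec_pos ?_ (fun x hx => ?_)
    · unfold Matrix.IsHermitian
      rw [conjTranspose_smul, hM.1.eq]
      simp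
    rw [smul_posDef_quad]
    exact mul_pos ht (hM.dotProduct_mulVec_pos hx)

/-- Comparison of TS2SLS and TSGMM asymptotic variances: with
`V_TS2SLS = (Φ_u/λ + ((1−λ)/λ)c)A⁻¹` and
`V_TSGMM = (Φ_u/λ − ((1−λ)/λ)(Φ_u²δ/(1+Φ_uδ)))A⁻¹`, the difference is psd iff
`c ≥ −Φ_u²δ/(1+Φ_uδ)`, and pd iff the inequality is strict. -/
theorem ts2sls_tsgmm_comparison {p : ℕ} (hp : 0 < p) (l Φu δ c : ℝ)
    (hl : 0 < l) (hl1 : l < 1) (hΦu : 0 < Φu) (hδ : 0 ≤ δ)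
    (A : Matrix (Fin p) (Fin p) ℝ) (hA : A.PosDef) :
    (((Φu / l + (1 - l) / l * c) • A⁻¹ -
        (Φu / l - (1 - l) / l * (Φu ^ 2 * δ / (1 + Φu * δ))) • A⁻¹).PosSemidef ↔
      c ≥ -(Φu ^ 2 * δ / (1 + Φu * δ))) ∧
    (((Φu / l + (1 - l) / l * c) • A⁻¹ -
        (Φu / l - (1 - l) / l * (Φu ^ 2 * δ / (1 + Φu * δ))) • A⁻¹).PosDef ↔
      c > -(Φu ^ 2 * δ / (1 + Φu * δ))) := by
  have hAinv : A⁻¹.PosDef := hA.inv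
  set e : ℝ := Φu ^ 2 * δ / (1 + Φu * δ) with he
  have hkey : (Φu / l + (1 - l) / l * c) • A⁻¹ -
      (Φu / l - (1 - l) / l * e) • A⁻¹ = ((1 - l) / l * (c + e)) • A⁻¹ := by
    rw [← sub_smul]; ring_nf
  have hpos : 0 < (1 - l) / l := div_pos (by linarith) hl
  constructor
  · rw [hkey, smul_psd_iff hp _ hAinv]
    constructor
    · intro h
      have := nonneg_of_mul_nonneg_right h hpos
      linarith [(mul_nonneg hpos.le (show (0:ℝ) ≤ c + e from by nlinarith))]
    · intro h
      exact mul_nonneg hpos.le (by linarith)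
  · rw [hkey, smul_pd_iff hp _ hAinv]
    constructor
    · intro h
      nlinarith
    · intro h
      exact mul_pos hpos (by linarith)
end

section
/- Let Q₁, Q₂ be symmetric positive definite q×q matrices and S₁, S₂ symmetric positive definite q×q matrices. Then (Q₁S₁⁻¹Q₁ + Q₂S₂⁻¹Q₂)⁻¹ ≼ (Q₁+Q₂)⁻¹(S₁+S₂)(Q₁+Q₂)⁻¹ in the Loewner order, with equality if and only if S₁⁻¹Q₁ = S₂⁻¹Q₂. -/
open Matrix

section Aux

variable {n : Type*} [Fintype n] [DecidableEq n]

open scoped MatrixOrder in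
lemma aux_exists_sq {A : Matrix n n ℝ} (hA : A.PosSemidef) : ∃ B : Matrix n n ℝ, A = Bᴴ * B := by
  obtain ⟨X, hX, -, rfl⟩ := CFC.exists_sqrt_of_isSelfAdjoint_of_quasispectrumRestricts
    hA.isHermitian (QuasispectrumRestricts.nnreal_of_nonneg hA.nonneg)
  exact ⟨X, by rw [← star_eq_conjTranspose, hX.star_eq]⟩

lemma aux_fromBlocks_psd {A : Matrix n n ℝ} (hA : A.PosSemidef) :
    (fromBlocks A 0 0 (0 : Matrix n n ℝ)).PosSemidef := by
  obtain ⟨B, rfl⟩ := aux_exists_sq hA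
  have h : fromBlocks (Bᴴ * B) 0 0 (0 : Matrix n n ℝ)
      = (fromBlocks B 0 0 (0 : Matrix n n ℝ))ᴴ * fromBlocks B 0 0 0 := by
    rw [fromBlocks_conjTranspose, fromBlocks_multiply]
    simp
  rw [h]
  exact posSemidef_conjTranspose_mul_self _

lemma aux_inv_antitone {A B : Matrix n n ℝ} (hA : A.PosDef) (hB : B.PosDef)
    (h : (A - B).PosSemidef) : (B⁻¹ - A⁻¹).PosSemidef := by
  haveI := hA.isUnit.invertible
  haveI := hB.isUnit.invertible
  have h1 : (fromBlocks B 1 (1 : Matrix n n ℝ)ᴴ B⁻¹).PosSemidef := by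
    rw [PosDef.fromBlocks₁₁ _ _ hB]
    simpa using PosSemidef.zero
  have h2 := aux_fromBlocks_psd h
  have hAB : B + (A - B) = A := by abel
  have h3 : fromBlocks A (1 : Matrix n n ℝ) (1 : Matrix n n ℝ)ᴴ B⁻¹
      = fromBlocks B 1 (1 : Matrix n n ℝ)ᴴ B⁻¹ + fromBlocks (A - B) 0 0 0 := by
    rw [fromBlocks_add, hAB]
    simp
  have h4 : (fromBlocks A (1 : Matrix n n ℝ) (1 : Matrix n n ℝ)ᴴ B⁻¹).PosSemidef := by
    rw [h3]; exact h1.add h2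
  have h5 := (PosDef.fromBlocks₁₁ _ _ hA).mp h4
  simpa using h5

lemma aux_conj_posDef {A : Matrix n n ℝ} (hA : A.PosDef) {B : Matrix n n ℝ}
    (hB : IsUnit B) : (Bᴴ * A * B).PosDef := by
  refine PosDef.of_dotProduct_mulVec_pos (isHermitian_conjTranspose_mul_mul B hA.1) fun x hx => ?_
  have hinj := Matrix.mulVec_injective_iff_isUnit.mpr hB
  have hBx : B *ᵥ x ≠ 0 := fun h => hx (hinj (by simpa using h))
  simpa only [star_mulVec, dotProduct_mulVec, vecMul_vecMul] using hA.dotProduct_mulVec_pos hBx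

lemma aux_conj_eq_zero {T D : Matrix n n ℝ} (hT : T.PosDef) (h : Dᴴ * T * D = 0) :
    D = 0 := by
  obtain ⟨R, hR⟩ := aux_exists_sq hT.posSemidef
  have hdet : IsUnit R.det := by
    have h1 : R.det * R.det = T.det := by
      rw [hR, det_mul, det_conjTranspose, star_trivial]
    have h2 : R.det ≠ 0 := by
      intro h0
      rw [h0, mul_zero] at h1
      exact hT.det_pos.ne' h1.symm
    exact h2.isUnit
  haveI := ((Matrix.isUnit_iff_isUnit_det R).mpr hdet).invertible
  have hRD : R * D = 0 := by
    apply conjTranspose_mul_self_eq_zero.mp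
    rw [conjTranspose_mul]
    calc Dᴴ * Rᴴ * (R * D) = Dᴴ * (Rᴴ * R) * D := by
          simp only [Matrix.mul_assoc]
      _ = 0 := by rw [← hR, h]
  calc D = R⁻¹ * (R * D) := (Matrix.inv_mul_cancel_left_of_invertible (A := R) D).symm
    _ = 0 := by rw [hRD, Matrix.mul_zero]

end Aux

/-- Efficiency comparison of first-stage estimators (Theorem 6):
`(Q₁S₁⁻¹Q₁ + Q₂S₂⁻¹Q₂)⁻¹ ≼ (Q₁+Q₂)⁻¹(S₁+S₂)(Q₁+Q₂)⁻¹` in the Loewner order, with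
equality iff `S₁⁻¹Q₁ = S₂⁻¹Q₂`. -/
theorem gmm_ols_firststage {q : ℕ}
    (Q₁ Q₂ S₁ S₂ : Matrix (Fin q) (Fin q) ℝ)
    (hQ₁ : Q₁.PosDef) (hQ₂ : Q₂.PosDef) (hS₁ : S₁.PosDef) (hS₂ : S₂.PosDef) :
    ((Q₁ + Q₂)⁻¹ * (S₁ + S₂) * (Q₁ + Q₂)⁻¹
        - (Q₁ * S₁⁻¹ * Q₁ + Q₂ * S₂⁻¹ * Q₂)⁻¹).PosSemidef ∧
    ((Q₁ + Q₂)⁻¹ * (S₁ + S₂) * (Q₁ + Q₂)⁻¹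
        = (Q₁ * S₁⁻¹ * Q₁ + Q₂ * S₂⁻¹ * Q₂)⁻¹ ↔ S₁⁻¹ * Q₁ = S₂⁻¹ * Q₂) := by
  haveI := hS₁.isUnit.invertible
  haveI := hS₂.isUnit.invertible
  have hS : (S₁ + S₂).PosDef := hS₁.add hS₂
  have hQ : (Q₁ + Q₂).PosDef := hQ₁.add hQ₂
  haveI := hS.isUnit.invertible
  haveI := hQ.isUnit.invertible
  -- helper identities
  have h1 : (S₁ + S₂)⁻¹ * S₂ * S₁⁻¹ = S₁⁻¹ - (S₁ + S₂)⁻¹ := by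
    have e : S₂ = (S₁ + S₂) - S₁ := by abel
    calc (S₁ + S₂)⁻¹ * S₂ * S₁⁻¹
        = (S₁ + S₂)⁻¹ * ((S₁ + S₂) - S₁) * S₁⁻¹ := by rw [← e]
      _ = (S₁ + S₂)⁻¹ * (S₁ + S₂) * S₁⁻¹ - (S₁ + S₂)⁻¹ * S₁ * S₁⁻¹ := by
          rw [Matrix.mul_sub, Matrix.sub_mul]
      _ = S₁⁻¹ - (S₁ + S₂)⁻¹ := by
          rw [Matrix.inv_mul_of_invertible, Matrix.one_mul,
            Matrix.mul_inv_cancel_right_of_invertible]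
  have h2 : S₂⁻¹ * S₁ * (S₁ + S₂)⁻¹ = S₂⁻¹ - (S₁ + S₂)⁻¹ := by
    have e : S₁ = (S₁ + S₂) - S₂ := by abel
    calc S₂⁻¹ * S₁ * (S₁ + S₂)⁻¹
        = S₂⁻¹ * ((S₁ + S₂) - S₂) * (S₁ + S₂)⁻¹ := by rw [← e]
      _ = S₂⁻¹ * (S₁ + S₂) * (S₁ + S₂)⁻¹ - S₂⁻¹ * S₂ * (S₁ + S₂)⁻¹ := by
          rw [Matrix.mul_sub, Matrix.sub_mul]
      _ = S₂⁻¹ - (S₁ + S₂)⁻¹ := by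
          rw [Matrix.mul_inv_cancel_right_of_invertible, Matrix.inv_mul_of_invertible,
            Matrix.one_mul]
  have g1 : ∀ X : Matrix (Fin q) (Fin q) ℝ,
      (S₁ + S₂)⁻¹ * (S₂ * (S₁⁻¹ * X)) = S₁⁻¹ * X - (S₁ + S₂)⁻¹ * X := by
    intro X
    calc (S₁ + S₂)⁻¹ * (S₂ * (S₁⁻¹ * X)) = (S₁ + S₂)⁻¹ * S₂ * S₁⁻¹ * X := by
          simp only [Matrix.mul_assoc]
      _ = (S₁⁻¹ - (S₁ + S₂)⁻¹) * X := by rw [h1]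
      _ = S₁⁻¹ * X - (S₁ + S₂)⁻¹ * X := by rw [Matrix.sub_mul]
  have g2 : ∀ X : Matrix (Fin q) (Fin q) ℝ,
      S₂⁻¹ * (S₁ * ((S₁ + S₂)⁻¹ * X)) = S₂⁻¹ * X - (S₁ + S₂)⁻¹ * X := by
    intro X
    calc S₂⁻¹ * (S₁ * ((S₁ + S₂)⁻¹ * X)) = S₂⁻¹ * S₁ * (S₁ + S₂)⁻¹ * X := by
          simp only [Matrix.mul_assoc]
      _ = (S₂⁻¹ - (S₁ + S₂)⁻¹) * X := by rw [h2]
      _ = S₂⁻¹ * X - (S₁ + S₂)⁻¹ * X := by rw [Matrix.sub_mul]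
  -- the conjugating difference matrix and the weight
  have hDH : (S₁⁻¹ * Q₁ - S₂⁻¹ * Q₂)ᴴ = Q₁ * S₁⁻¹ - Q₂ * S₂⁻¹ := by
    rw [conjTranspose_sub, conjTranspose_mul, conjTranspose_mul,
      conjTranspose_nonsing_inv, conjTranspose_nonsing_inv,
      hQ₁.1.eq, hQ₂.1.eq, hS₁.1.eq, hS₂.1.eq]
  -- key algebraic identity
  have key : (S₁⁻¹ * Q₁ - S₂⁻¹ * Q₂)ᴴ * (S₁ * (S₁ + S₂)⁻¹ * S₂) * (S₁⁻¹ * Q₁ - S₂⁻¹ * Q₂)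
      = (Q₁ * S₁⁻¹ * Q₁ + Q₂ * S₂⁻¹ * Q₂)
        - (Q₁ + Q₂) * (S₁ + S₂)⁻¹ * (Q₁ + Q₂) := by
    rw [hDH]
    simp only [Matrix.sub_mul, Matrix.mul_sub, Matrix.add_mul, Matrix.mul_add,
      Matrix.mul_assoc, Matrix.inv_mul_cancel_left_of_invertible,
      Matrix.mul_inv_cancel_left_of_invertible, g1, g2]
    abel
  -- the weight matrix is positive definite
  have hT : (S₁ * (S₁ + S₂)⁻¹ * S₂).PosDef := by
    have hM : (S₂⁻¹ + S₁⁻¹).PosDef := hS₂.inv.add hS₁.inv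
    have h4 : S₁ * (S₁ + S₂)⁻¹ * S₂ * (S₂⁻¹ + S₁⁻¹) = 1 := by
      have e5 : S₁ * (S₁ + S₂)⁻¹ * S₂ * S₁⁻¹ = 1 - S₁ * (S₁ + S₂)⁻¹ := by
        calc S₁ * (S₁ + S₂)⁻¹ * S₂ * S₁⁻¹ = S₁ * ((S₁ + S₂)⁻¹ * S₂ * S₁⁻¹) := by
              simp only [Matrix.mul_assoc]
          _ = S₁ * (S₁⁻¹ - (S₁ + S₂)⁻¹) := by rw [h1]
          _ = 1 - S₁ * (S₁ + S₂)⁻¹ := by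
              rw [Matrix.mul_sub, Matrix.mul_inv_of_invertible]
      rw [Matrix.mul_add, Matrix.mul_inv_cancel_right_of_invertible, e5]
      abel
    have h5 : (S₂⁻¹ + S₁⁻¹)⁻¹ = S₁ * (S₁ + S₂)⁻¹ * S₂ := Matrix.inv_eq_left_inv h4
    rw [← h5]
    exact hM.inv
  -- the OLS sandwich matrix is positive definite
  have hW : ((Q₁ + Q₂) * (S₁ + S₂)⁻¹ * (Q₁ + Q₂)).PosDef := by
    have := aux_conj_posDef hS.inv hQ.isUnit
    rwa [hQ.1.eq] at this
  haveI := hW.isUnit.invertible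
  -- the GMM matrix is positive definite
  have hpsd : ((S₁⁻¹ * Q₁ - S₂⁻¹ * Q₂)ᴴ * (S₁ * (S₁ + S₂)⁻¹ * S₂)
      * (S₁⁻¹ * Q₁ - S₂⁻¹ * Q₂)).PosSemidef :=
    hT.posSemidef.conjTranspose_mul_mul_same _
  have hG : (Q₁ * S₁⁻¹ * Q₁ + Q₂ * S₂⁻¹ * Q₂).PosDef := by
    have e : Q₁ * S₁⁻¹ * Q₁ + Q₂ * S₂⁻¹ * Q₂
        = (Q₁ + Q₂) * (S₁ + S₂)⁻¹ * (Q₁ + Q₂)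
          + (S₁⁻¹ * Q₁ - S₂⁻¹ * Q₂)ᴴ * (S₁ * (S₁ + S₂)⁻¹ * S₂)
            * (S₁⁻¹ * Q₁ - S₂⁻¹ * Q₂) := by
      rw [key]; abel
    rw [e]
    exact hW.add_posSemidef hpsd
  haveI := hG.isUnit.invertible
  -- inverse of the sandwich
  have hinvW : ((Q₁ + Q₂) * (S₁ + S₂)⁻¹ * (Q₁ + Q₂))⁻¹
      = (Q₁ + Q₂)⁻¹ * (S₁ + S₂) * (Q₁ + Q₂)⁻¹ := by
    rw [Matrix.mul_inv_rev, Matrix.mul_inv_rev, Matrix.inv_inv_of_invertible,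
      ← Matrix.mul_assoc]
  have hdiff : ((Q₁ * S₁⁻¹ * Q₁ + Q₂ * S₂⁻¹ * Q₂)
      - (Q₁ + Q₂) * (S₁ + S₂)⁻¹ * (Q₁ + Q₂)).PosSemidef := by
    rw [← key]; exact hpsd
  constructor
  · have := aux_inv_antitone hG hW hdiff
    rwa [hinvW] at this
  · constructor
    · intro heq
      have heq' : ((Q₁ + Q₂) * (S₁ + S₂)⁻¹ * (Q₁ + Q₂))⁻¹
          = (Q₁ * S₁⁻¹ * Q₁ + Q₂ * S₂⁻¹ * Q₂)⁻¹ := by rw [hinvW, heq]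
      have heq'' : (Q₁ + Q₂) * (S₁ + S₂)⁻¹ * (Q₁ + Q₂)
          = Q₁ * S₁⁻¹ * Q₁ + Q₂ * S₂⁻¹ * Q₂ := by
        calc (Q₁ + Q₂) * (S₁ + S₂)⁻¹ * (Q₁ + Q₂)
            = (((Q₁ + Q₂) * (S₁ + S₂)⁻¹ * (Q₁ + Q₂))⁻¹)⁻¹ :=
              (Matrix.inv_inv_of_invertible _).symm
          _ = ((Q₁ * S₁⁻¹ * Q₁ + Q₂ * S₂⁻¹ * Q₂)⁻¹)⁻¹ := by rw [heq']
          _ = Q₁ * S₁⁻¹ * Q₁ + Q₂ * S₂⁻¹ * Q₂ := Matrix.inv_inv_of_invertible _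
      have hzero : (S₁⁻¹ * Q₁ - S₂⁻¹ * Q₂)ᴴ * (S₁ * (S₁ + S₂)⁻¹ * S₂)
          * (S₁⁻¹ * Q₁ - S₂⁻¹ * Q₂) = 0 := by
        rw [key, heq'']; abel
      have hD0 : S₁⁻¹ * Q₁ - S₂⁻¹ * Q₂ = 0 := aux_conj_eq_zero hT hzero
      exact sub_eq_zero.mp hD0
    · intro hD
      have hD0 : S₁⁻¹ * Q₁ - S₂⁻¹ * Q₂ = 0 := sub_eq_zero.mpr hD
      have heq'' : Q₁ * S₁⁻¹ * Q₁ + Q₂ * S₂⁻¹ * Q₂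
          = (Q₁ + Q₂) * (S₁ + S₂)⁻¹ * (Q₁ + Q₂) := by
        have := key
        rw [hD0] at this
        simp only [conjTranspose_zero, Matrix.mul_zero, Matrix.zero_mul] at this
        exact sub_eq_zero.mp this.symm
      rw [← hinvW, heq'']
  done
end
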